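/- Let Φ be a reduced root system and R a commutative ring. For all p,q ≥ 1, ω^p ∈ C^p(Φ,R) and ω^q ∈ C^q(Φ,R), the signed reversal of a cup product satisfies ρ̂^{p+q}(ω^p ∪ ω^q) = (−1)^{pq+1} (ρ̂^q ω^q) ∪ (ρ̂^p ω^p); equivalently, ρ̂^{p+q}(ω^p ∪ ω^q) = (−1)^{κ_{p+q}+κ_p+κ_q} (ρ̂^q ω^q) ∪ (ρ̂^p ω^p), since κ_{p+q} + κ_p + κ_q ≡ pq + 1 (mod 2). -/

import Mathlib

open scoped RealInnerProductSpace

/-- A reduced root system `Φ` in a real inner product space `V`: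
a finite set of nonzero vectors spanning `V`, closed under the reflections it determines,
with integral Cartan numbers, such that the only multiples of a root in `Φ` are `±α`. -/
structure ReducedRootSystem (V : Type) [NormedAddCommGroup V] [InnerProductSpace ℝ V] :
    Type where
  roots : Set V
  finite : roots.Finite
  nonzero : ∀ α ∈ roots, α ≠ 0
  spans : Submodule.span ℝ roots = ⊤
  reflect_mem : ∀ α ∈ roots, ∀ β ∈ roots, β - (2 * ⟪β, α⟫ / ⟪α, α⟫) • α ∈ roots
  integral : ∀ α ∈ roots, ∀ β ∈ roots, ∃ n : ℤ, 2 * ⟪β, α⟫ / ⟪α, α⟫ = (n : ℝ)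
  reduced : ∀ α ∈ roots, ∀ t : ℝ, t • α ∈ roots → t = 1 ∨ t = -1

variable {V : Type} [NormedAddCommGroup V] [InnerProductSpace ℝ V]

/-- `Φ₀ = Φ ∪ {0}`. -/
def rootsZero (Φ : ReducedRootSystem V) : Set V := insert 0 Φ.roots

/-- Contraction of a tuple at position `j` (adding the `j`-th and `(j+1)`-st entries). -/
def contractAt (l : List V) (j : ℕ) : List V :=
  l.take j ++ (l.getD j 0 + l.getD (j + 1) 0) :: l.drop (j + 2)

/-- `IsRootChainAux Φ n l`: the tuple `l` of length `n` is a generator of `T_n(Φ)`: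
`T₁(Φ) = Φ₀`, and an `n`-tuple with entries in `Φ₀` lies in `T_n(Φ)` iff all its
contractions lie in `T_{n-1}(Φ)`. -/
def IsRootChainAux (Φ : ReducedRootSystem V) : ℕ → List V → Prop
  | 0, _ => False
  | 1, l => ∃ r ∈ rootsZero Φ, l = [r]
  | n + 2, l => l.length = n + 2 ∧ (∀ r ∈ l, r ∈ rootsZero Φ) ∧
      ∀ j, j + 1 < l.length → IsRootChainAux Φ (n + 1) (contractAt l j)

/-- `l` is a generator of `T_{l.length}(Φ)`. -/
def IsRootChain (Φ : ReducedRootSystem V) (l : List V) : Prop := IsRootChainAux Φ l.length l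

open Classical in
/-- Evaluation of a cochain on a chain generator: tuples containing `0` are identified with
the zero chain `0ₙ`, on which any cochain vanishes. -/
noncomputable def chainEv {M : Type} [Zero M] (ω : List V → M) (l : List V) : M :=
  if (0 : V) ∈ l then 0 else ω l

/-- The coboundary operator `dⁿ` on cochains, `dⁿωⁿ(r₀|⋯|rₙ) = ωⁿ(∂ⁿ[r₀|⋯|rₙ])`. -/
noncomputable def cobd {M : Type} [AddCommGroup M] (ω : List V → M) (l : List V) : M :=
  chainEv ω l.tail
    + (∑ j ∈ Finset.range (l.length - 1), ((-1 : ℤ) ^ (j + 1)) • chainEv ω (contractAt l j))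
    - ((-1 : ℤ) ^ (l.length - 1)) • chainEv ω l.dropLast

/-- The cup product of a `p`-cochain `ωp` with a cochain `ωq`:
`(ωp ∪ ωq)(r₁|⋯|r_{p+q}) = ωp(r₁|⋯|r_p) · ωq(r_{p+1}|⋯|r_{p+q})`. -/
noncomputable def cup {R : Type} [CommRing R] (p : ℕ) (ωp ωq : List V → R)
    (l : List V) : R :=
  chainEv ωp (l.take p) * chainEv ωq (l.drop p)

/-- `κₙ = C(n+1,2) + 1`. -/
def kappa (n : ℕ) : ℕ := Nat.choose (n + 1) 2 + 1

/-- The signed reversal operator `ρ̂ⁿ` on `n`-cochains: `(ρ̂ⁿω)(φ) = (-1)^{κₙ} ω(ρⁿφ)`. -/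
noncomputable def rhoHat {M : Type} [AddCommGroup M] (n : ℕ) (ω : List V → M)
    (l : List V) : M :=
  ((-1 : ℤ) ^ kappa n) • ω l.reverse

/-!
Reversing a `(p + q)`-tuple exchanges its first `p` and last `q` entries and reverses each
block, so `ρ̂^{p+q}(ωp ∪ ωq)` and `(ρ̂^q ωq) ∪ (ρ̂^p ωp)` differ only by the sign
`(-1)^{κ_{p+q} + κ_p + κ_q}`. Its parity comes from `C(p+q+1, 2) = C(p+1, 2) + C(q+1, 2) + pq`,
i.e. `κ_{p+q} + 1 = κ_p + κ_q + pq`.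
-/

theorem kappa_add (p q : ℕ) : kappa (p + q) + 1 = kappa p + kappa q + p * q := by
  have : (kappa (p + q) + 1 : ℚ) = kappa p + kappa q + p * q := by
    simp only [kappa, Nat.cast_add, Nat.cast_one, Nat.cast_choose_two]
    ring
  exact_mod_cast this

theorem kappa_add_add_kappa_add_kappa_mod_two (p q : ℕ) :
    (kappa (p + q) + kappa p + kappa q) % 2 = (p * q + 1) % 2 := by
  have := kappa_add p q
  omega

theorem neg_one_pow_kappa_add (p q : ℕ) :
    (-1 : ℤ) ^ kappa (p + q) = (-1) ^ (p * q + 1) * (-1) ^ kappa q * (-1) ^ kappa p := by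
  have hsum : p * q + 1 + kappa q + kappa p = kappa (p + q) + 2 := by
    have := kappa_add p q
    omega
  rw [← pow_add, ← pow_add, hsum, pow_add, neg_one_sq, mul_one]

section

omit [InnerProductSpace ℝ V]

theorem chainEv_smul {S M : Type} [Zero M] [SMulZeroClass S M] (a : S) (ω : List V → M)
    (l : List V) : chainEv (a • ω) l = a • chainEv ω l := by
  unfold chainEv
  split_ifs <;> simp

theorem cup_smul_left {S R : Type} [CommRing R] [SMulZeroClass S R] [IsScalarTower S R R]
    (p : ℕ) (a : S) (ωp ωq : List V → R) (l : List V) :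
    cup p (a • ωp) ωq l = a • cup p ωp ωq l := by
  simp only [cup, chainEv_smul, smul_mul_assoc]

theorem cup_smul_right {S R : Type} [CommRing R] [SMulZeroClass S R] [SMulCommClass S R R]
    (p : ℕ) (a : S) (ωp ωq : List V → R) (l : List V) :
    cup p ωp (a • ωq) l = a • cup p ωp ωq l := by
  simp only [cup, chainEv_smul, mul_smul_comm]

omit [NormedAddCommGroup V] in
theorem rhoHat_eq_smul_comp_reverse {M : Type} [AddCommGroup M] (n : ℕ) (ω : List V → M) :
    rhoHat n ω = ((-1 : ℤ) ^ kappa n) • (ω ∘ List.reverse) :=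
  rfl

theorem chainEv_comp_reverse {M : Type} [Zero M] (ω : List V → M) (l : List V) :
    chainEv (ω ∘ List.reverse) l = chainEv ω l.reverse := by
  by_cases h : (0 : V) ∈ l <;> simp [chainEv, h]

theorem cup_reverse {R : Type} [CommRing R] {p q : ℕ} (ωp ωq : List V → R) {l : List V}
    (hl : l.length = p + q) :
    cup p ωp ωq l.reverse = cup q (ωq ∘ List.reverse) (ωp ∘ List.reverse) l := by
  have htake : l.reverse.take p = (l.drop q).reverse := by
    rw [List.take_reverse, hl, Nat.add_sub_cancel_left]
  have hdrop : l.reverse.drop p = (l.take q).reverse := by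
    rw [List.drop_reverse, hl, Nat.add_sub_cancel_left]
  rw [cup, cup, htake, hdrop, chainEv_comp_reverse, chainEv_comp_reverse, mul_comm]

end

theorem rhoHat_cup_general
    {V : Type} [NormedAddCommGroup V] [InnerProductSpace ℝ V]
    (Φ : ReducedRootSystem V) (R : Type) [CommRing R] (p q : ℕ)
    (ωp ωq : List V → R) :
    (∀ l : List V, l.length = p + q → IsRootChain Φ l →
        rhoHat (p + q) (cup p ωp ωq) l
          = ((-1 : ℤ) ^ (p * q + 1)) • cup q (rhoHat q ωq) (rhoHat p ωp) l) ∧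
    (∀ l : List V, l.length = p + q → IsRootChain Φ l →
        rhoHat (p + q) (cup p ωp ωq) l
          = ((-1 : ℤ) ^ (kappa (p + q) + kappa p + kappa q)) •
              cup q (rhoHat q ωq) (rhoHat p ωp) l) ∧
    (kappa (p + q) + kappa p + kappa q) % 2 = (p * q + 1) % 2 := by
  have hmod := kappa_add_add_kappa_add_kappa_mod_two p q
  have hrev : ∀ l : List V, l.length = p + q →
      rhoHat (p + q) (cup p ωp ωq) l
        = ((-1 : ℤ) ^ (p * q + 1)) • cup q (rhoHat q ωq) (rhoHat p ωp) l := by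
    intro l hl
    rw [rhoHat, cup_reverse ωp ωq hl, rhoHat_eq_smul_comp_reverse q,
      rhoHat_eq_smul_comp_reverse p, cup_smul_left, cup_smul_right, smul_smul, smul_smul,
      neg_one_pow_kappa_add]
  refine ⟨fun l hl _ => hrev l hl, fun l hl _ => ?_, hmod⟩
  rw [hrev l hl]
  congr 1
  rw [neg_one_pow_eq_pow_mod_two, ← hmod, ← neg_one_pow_eq_pow_mod_two]

/-- The signed reversal of a cup product satisfies
`ρ̂^{p+q}(ωp ∪ ωq) = (-1)^{pq+1} (ρ̂^q ωq) ∪ (ρ̂^p ωp)`, equivalently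
`ρ̂^{p+q}(ωp ∪ ωq) = (-1)^{κ_{p+q}+κ_p+κ_q} (ρ̂^q ωq) ∪ (ρ̂^p ωp)`,
since `κ_{p+q} + κ_p + κ_q ≡ pq + 1 (mod 2)`.  (Identities of `(p+q)`-cochains,
i.e. they hold on every chain in `T_{p+q}(Φ)`.) -/
theorem rhoHat_cup
    {V : Type} [NormedAddCommGroup V] [InnerProductSpace ℝ V] [FiniteDimensional ℝ V]
    (Φ : ReducedRootSystem V) (R : Type) [CommRing R] (p q : ℕ) (hp : 1 ≤ p) (hq : 1 ≤ q)
    (ωp ωq : List V → R) :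
    (∀ l : List V, l.length = p + q → IsRootChain Φ l →
        rhoHat (p + q) (cup p ωp ωq) l
          = ((-1 : ℤ) ^ (p * q + 1)) • cup q (rhoHat q ωq) (rhoHat p ωp) l) ∧
    (∀ l : List V, l.length = p + q → IsRootChain Φ l →
        rhoHat (p + q) (cup p ωp ωq) l
          = ((-1 : ℤ) ^ (kappa (p + q) + kappa p + kappa q)) •
              cup q (rhoHat q ωq) (rhoHat p ωp) l) ∧
    (kappa (p + q) + kappa p + kappa q) % 2 = (p * q + 1) % 2 :=
  rhoHat_cup_general Φ R p q ωp ωq
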